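/- Let C be a category with a terminal object 1, G : C ⥤ C an endofunctor, M a monad on C with unit η and multiplication μ, and α : G ⟶ M a natural transformation into the underlying functor of M. Define natural transformations α_n : G^n ⟶ M recursively by α_0 = η and, at an object X, (α_{n+1})_X = μ_X ∘ α_{(M X)} ∘ G((α_n)_X), where G^{n+1} X = G(G^n X). For a G-coalgebra γ : X ⟶ G X, define the canonical cone γ_n : X ⟶ G^n 1 by γ_0 = !_X (the unique morphism to 1) and γ_{n+1} = G(γ_n) ∘ γ, and define the iterates γ^(n) : X ⟶ M X by γ^(0) = η_X and γ^(n+1) = μ_X ∘ M(α_X ∘ γ) ∘ γ^(n). Then for every n < ω, M(!_X) ∘ γ^(n) = (α_n)_1 ∘ γ_n as morphisms X ⟶ M 1. -/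

import Mathlib

open CategoryTheory CategoryTheory.Limits

/-- The `n`-fold composite `G^n` of an endofunctor, with `G^(n+1) X = G (G^n X)`. -/
def functorPow {C : Type*} [Category C] (G : C ⥤ C) : ℕ → C ⥤ C
  | 0 => 𝟭 C
  | n + 1 => functorPow G n ⋙ G

/-- For a trace semantics `α : G ⟶ M`, with `α_n : G^n ⟶ M` defined by
`α_0 = η`, `(α_{n+1})_X = μ_X ∘ α_{M X} ∘ G((α_n)_X)`, the canonical cone
`γ_0 = !_X`, `γ_{n+1} = G(γ_n) ∘ γ`, and iterates `γ⁽⁰⁾ = η_X`,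
`γ⁽ⁿ⁺¹⁾ = μ_X ∘ M(α_X ∘ γ) ∘ γ⁽ⁿ⁾`, we have `M(!_X) ∘ γ⁽ⁿ⁾ = (α_n)_1 ∘ γ_n`
for all `n < ω`. -/
theorem stmt1 {C : Type*} [Category C] [HasTerminal C]
    (G : C ⥤ C) (M : Monad C) (α : G ⟶ M.toFunctor)
    {X : C} (γ : X ⟶ G.obj X)
    (αn : ∀ n : ℕ, (functorPow G n).obj (⊤_ C) ⟶ M.obj (⊤_ C))
    (hα0 : αn 0 = M.η.app (⊤_ C))
    (hαs : ∀ n, αn (n + 1) = G.map (αn n) ≫ α.app (M.obj (⊤_ C)) ≫ M.μ.app (⊤_ C))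
    (cone : ∀ n : ℕ, X ⟶ (functorPow G n).obj (⊤_ C))
    (hc0 : cone 0 = terminal.from X)
    (hcs : ∀ n, cone (n + 1) = γ ≫ G.map (cone n))
    (iter : ℕ → (X ⟶ M.obj X))
    (h0 : iter 0 = M.η.app X)
    (hs : ∀ n, iter (n + 1) = iter n ≫ M.map (γ ≫ α.app X) ≫ M.μ.app X) :
    ∀ n, iter n ≫ M.map (terminal.from X) = cone n ≫ αn n := by
  set f : X ⟶ M.obj X := γ ≫ α.app X with hf
  -- Kleisli-power commutation
  have comm : ∀ n, f ≫ M.map (iter n) ≫ M.μ.app X = iter n ≫ M.map f ≫ M.μ.app X := by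
    intro n
    induction n with
    | zero =>
      rw [h0]
      have this1 := M.η.naturality f
      simp only [Functor.id_map] at this1
      have h1 : f ≫ M.map (M.η.app X) ≫ M.μ.app X = f ≫ 𝟙 _ := by
        rw [Monad.right_unit]; rfl
      have h2 : M.η.app X ≫ M.map f ≫ M.μ.app X = f ≫ 𝟙 _ := by
        rw [← Category.assoc, ← this1, Category.assoc, Monad.left_unit]; rfl
      rw [h1, h2]
    | succ n ih =>
      rw [hs n]
      calc f ≫ M.map (iter n ≫ M.map f ≫ M.μ.app X) ≫ M.μ.app X
          = f ≫ M.map (iter n) ≫ M.map (M.map f) ≫ M.map (M.μ.app X) ≫ M.μ.app X := by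
            simp
        _ = f ≫ M.map (iter n) ≫ M.map (M.map f) ≫ M.μ.app (M.obj X) ≫ M.μ.app X := by
            rw [Monad.assoc]
        _ = f ≫ M.map (iter n) ≫ M.μ.app X ≫ M.map f ≫ M.μ.app X := by
            have := M.μ.naturality f
            simp only [Functor.comp_map] at this
            rw [← Category.assoc (M.map (M.map f)), this]
            simp
        _ = (f ≫ M.map (iter n) ≫ M.μ.app X) ≫ M.map f ≫ M.μ.app X := by
            simp
        _ = (iter n ≫ M.map f ≫ M.μ.app X) ≫ M.map f ≫ M.μ.app X := by
            rw [ih]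
  intro n
  induction n with
  | zero =>
    rw [h0, hc0, hα0]
    have := M.η.naturality (terminal.from X)
    simp only [Functor.id_map] at this
    exact this.symm
  | succ n ih =>
    rw [hs n, hcs n, hαs n]
    calc (iter n ≫ M.map f ≫ M.μ.app X) ≫ M.map (terminal.from X)
        = iter n ≫ M.map f ≫ M.map (M.map (terminal.from X)) ≫ M.μ.app (⊤_ C) := by
          have := M.μ.naturality (terminal.from X)
          simp only [Functor.comp_map] at this
          simp [← this]
      _ = f ≫ M.map (iter n) ≫ M.map (M.map (terminal.from X)) ≫ M.μ.app (⊤_ C) := by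
          have h := comm n
          have h' := congrArg (· ≫ M.map (terminal.from X)) h
          simp only [Category.assoc] at h'
          have := M.μ.naturality (terminal.from X)
          simp only [Functor.comp_map] at this
          rw [← this] at h'
          simpa using h'.symm
      _ = f ≫ M.map (iter n ≫ M.map (terminal.from X)) ≫ M.μ.app (⊤_ C) := by simp
      _ = f ≫ M.map (cone n ≫ αn n) ≫ M.μ.app (⊤_ C) := by rw [ih]
      _ = γ ≫ G.map (cone n ≫ αn n) ≫ α.app (M.obj (⊤_ C)) ≫ M.μ.app (⊤_ C) := by
          have hnat := α.naturality (cone n ≫ αn n)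
          rw [hf]
          simp only [Category.assoc]
          rw [reassoc_of% hnat]
      _ = (γ ≫ G.map (cone n)) ≫ G.map (αn n) ≫ α.app (M.obj (⊤_ C)) ≫ M.μ.app (⊤_ C) := by
          simp
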